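/- In the reduction from independent set to list coloring reconfiguration: if there is a reconfiguration sequence from f_ini to f_tar, then some coloring f in the sequence assigns color c-star to w_2, and consequently every selection vertex v_i receives a color c_i^{p_i} ≠ c-star under f; the set {u_{p_i} : 1 ≤ i ≤ s} is then an independent set of size s in H (with all p_i distinct). -/
import Mathlib


/-- Colors for the reduction: the color `c-star`, the colors `a` and `b`, and a color
`c i p` for each selection index `i` and each vertex `u_p` of `H`. -/
inductive RCol (n s : ℕ) where
  | star : RCol n s
  | a : RCol n s
  | b : RCol n s
  | c (i : Fin s) (p : Fin n) : RCol n s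
deriving DecidableEq

/-- Index data of an `(i,j;p,q)`-forbidding gadget: it is valid when `i < j` and either
`p = q` (one gadget per vertex `u_p` of `H`) or `u_p u_q` is an edge of `H`
(both orientations of each edge). -/
def Gadget {n : ℕ} (H : SimpleGraph (Fin n)) (s : ℕ) :=
  {x : (Fin s × Fin s) × Fin n × Fin n //
    x.1.1 < x.1.2 ∧ (x.2.1 = x.2.2 ∨ H.Adj x.2.1 x.2.2)}

instance {n : ℕ} (H : SimpleGraph (Fin n)) (s : ℕ) : DecidableEq (Gadget H s) :=
  Subtype.instDecidableEq

/-- Vertices of the reduction graph: selection vertices `v_i` (`Sum.inl i`), forbidding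
vertices (`Sum.inr (Sum.inl g)`), and the two vertices `w₁ = Sum.inr (Sum.inr 0)` and
`w₂ = Sum.inr (Sum.inr 1)`. -/
abbrev RV {n : ℕ} (H : SimpleGraph (Fin n)) (s : ℕ) := Fin s ⊕ (Gadget H s ⊕ Fin 2)

/-- Base adjacency relation of the reduction graph: `w₂` is adjacent to every selection
vertex and to `w₁`; an `(i,j;p,q)`-forbidding vertex is adjacent to `v_i` and `v_j`. -/
def redRel {n : ℕ} (H : SimpleGraph (Fin n)) (s : ℕ) : RV H s → RV H s → Prop
  | Sum.inl i, Sum.inr (Sum.inr j) => j = 1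
  | Sum.inr (Sum.inl g), Sum.inl i => i = g.val.1.1 ∨ i = g.val.1.2
  | Sum.inr (Sum.inr j), Sum.inr (Sum.inr j') => j = 0 ∧ j' = 1
  | _, _ => False

/-- The reduction graph `G` constructed from the instance `(H, s)` of independent set. -/
def redGraph {n : ℕ} (H : SimpleGraph (Fin n)) (s : ℕ) : SimpleGraph (RV H s) :=
  SimpleGraph.fromRel (redRel H s)

/-- The list assignment of the reduction: `L(v_i) = {c-star, c_i^1, ..., c_i^n}`, an
`(i,j;p,q)`-forbidding vertex has list `{c_i^q, c_j^p}`, `L(w₁) = {a, b}`, and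
`L(w₂) = {a, b, c-star}`. -/
def redList {n : ℕ} (H : SimpleGraph (Fin n)) (s : ℕ) : RV H s → Set (RCol n s)
  | Sum.inl i => {RCol.star} ∪ {x | ∃ p, x = RCol.c i p}
  | Sum.inr (Sum.inl g) => {RCol.c g.val.1.1 g.val.2.2, RCol.c g.val.1.2 g.val.2.1}
  | Sum.inr (Sum.inr j) =>
      if j = 0 then {RCol.a, RCol.b} else {RCol.a, RCol.b, RCol.star}

/-- `f` is a proper list coloring of `G` with respect to the list assignment `L`. -/
def IsProperListColoring {V C : Type*} (G : SimpleGraph V) (L : V → Set C) (f : V → C) : Prop :=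
  (∀ v, f v ∈ L v) ∧ ∀ u v, G.Adj u v → f u ≠ f v

/-- Soundness of the reduction: if there is a reconfiguration sequence
`f 0 = f_ini, ..., f ℓ = f_tar` of proper list colorings of the reduction graph
(consecutive colorings differing on exactly one vertex), then some coloring `f t` in the
sequence assigns `c-star` to `w₂`; consequently each selection vertex `v_i` receives a
color `c_i^{p i} ≠ c-star` under `f t`, the map `p` is injective, and
`{u_{p i} : i}` is an independent set of size `s` in `H`. -/
theorem reduction_reconf_to_independentSet {n : ℕ} (H : SimpleGraph (Fin n)) (s : ℕ)
    (fini ftar : RV H s → RCol n s)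
    (hfini : IsProperListColoring (redGraph H s) (redList H s) fini)
    (hftar : IsProperListColoring (redGraph H s) (redList H s) ftar)
    (hsel : ∀ i : Fin s, fini (Sum.inl i) = RCol.star ∧ ftar (Sum.inl i) = RCol.star)
    (hw1i : fini (Sum.inr (Sum.inr 0)) = RCol.a)
    (hw2i : fini (Sum.inr (Sum.inr 1)) = RCol.b)
    (hw1t : ftar (Sum.inr (Sum.inr 0)) = RCol.b)
    (hw2t : ftar (Sum.inr (Sum.inr 1)) = RCol.a)
    (ℓ : ℕ) (f : ℕ → RV H s → RCol n s)
    (h0 : f 0 = fini) (hl : f ℓ = ftar)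
    (hproper : ∀ i ≤ ℓ, IsProperListColoring (redGraph H s) (redList H s) (f i))
    (hstep : ∀ i < ℓ, ∃ v, f i v ≠ f (i + 1) v ∧ ∀ u, u ≠ v → f i u = f (i + 1) u) :
    ∃ t ≤ ℓ, f t (Sum.inr (Sum.inr 1)) = RCol.star ∧
      ∃ p : Fin s → Fin n,
        (∀ i : Fin s, f t (Sum.inl i) = RCol.c i (p i)) ∧
        Function.Injective p ∧
        ∀ i j : Fin s, i ≠ j → ¬ H.Adj (p i) (p j) := by
  classical
  have key : ∀ m : ℕ, (∀ i < m, f i (Sum.inr (Sum.inr 0)) = f (i+1) (Sum.inr (Sum.inr 0))) →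
      f 0 (Sum.inr (Sum.inr 0)) = f m (Sum.inr (Sum.inr 0)) := by
    intro m
    induction m with
    | zero => intro _; rfl
    | succ k ih =>
      intro h
      rw [ih (fun i hi => h i (Nat.lt_succ_of_lt hi)), h k (Nat.lt_succ_self k)]
  have hne : f 0 (Sum.inr (Sum.inr 0)) ≠ f ℓ (Sum.inr (Sum.inr 0)) := by
    rw [h0, hl, hw1i, hw1t]; simp
  obtain ⟨i, hiℓ, hchange⟩ : ∃ i < ℓ, f i (Sum.inr (Sum.inr 0)) ≠ f (i+1) (Sum.inr (Sum.inr 0)) := by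
    by_contra hc
    push_neg at hc
    exact hne (key ℓ hc)
  obtain ⟨v, hv1, hv2⟩ := hstep i hiℓ
  have hvw1 : v = Sum.inr (Sum.inr 0) := by
    by_contra h
    exact hchange (hv2 _ fun e => h e.symm)
  have hw2eq : f i (Sum.inr (Sum.inr 1)) = f (i+1) (Sum.inr (Sum.inr 1)) := by
    apply hv2
    rw [hvw1]
    simp
  have hp := hproper i (le_of_lt hiℓ)
  have hp' := hproper (i+1) hiℓ
  have hadj12 : (redGraph H s).Adj (Sum.inr (Sum.inr 0)) (Sum.inr (Sum.inr 1)) := by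
    rw [redGraph, SimpleGraph.fromRel_adj]
    exact ⟨by simp, Or.inl ⟨rfl, rfl⟩⟩
  have m1 : f i (Sum.inr (Sum.inr 0)) = RCol.a ∨ f i (Sum.inr (Sum.inr 0)) = RCol.b := by
    have := hp.1 (Sum.inr (Sum.inr 0))
    simpa [redList] using this
  have m2 : f (i+1) (Sum.inr (Sum.inr 0)) = RCol.a ∨ f (i+1) (Sum.inr (Sum.inr 0)) = RCol.b := by
    have := hp'.1 (Sum.inr (Sum.inr 0))
    simpa [redList] using this
  have m3 : f i (Sum.inr (Sum.inr 1)) = RCol.a ∨ f i (Sum.inr (Sum.inr 1)) = RCol.b ∨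
      f i (Sum.inr (Sum.inr 1)) = RCol.star := by
    have := hp.1 (Sum.inr (Sum.inr 1))
    simpa [redList] using this
  have ne1 : f i (Sum.inr (Sum.inr 0)) ≠ f i (Sum.inr (Sum.inr 1)) := hp.2 _ _ hadj12
  have ne2 : f (i+1) (Sum.inr (Sum.inr 0)) ≠ f (i+1) (Sum.inr (Sum.inr 1)) := hp'.2 _ _ hadj12
  have na : f i (Sum.inr (Sum.inr 1)) ≠ RCol.a := by
    rcases m1 with h1 | h1
    · rw [← h1]; exact fun e => ne1 e.symm
    · rcases m2 with h2 | h2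
      · rw [hw2eq, ← h2]; exact fun e => ne2 e.symm
      · exact absurd (h1.trans h2.symm) hchange
  have nb : f i (Sum.inr (Sum.inr 1)) ≠ RCol.b := by
    rcases m1 with h1 | h1
    · rcases m2 with h2 | h2
      · exact absurd (h1.trans h2.symm) hchange
      · rw [hw2eq, ← h2]; exact fun e => ne2 e.symm
    · rw [← h1]; exact fun e => ne1 e.symm
  have hstar : f i (Sum.inr (Sum.inr 1)) = RCol.star := by
    rcases m3 with h3 | h3 | h3
    · exact absurd h3 na
    · exact absurd h3 nb
    · exact h3
  refine ⟨i, le_of_lt hiℓ, hstar, ?_⟩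
  have hselc : ∀ j : Fin s, ∃ q, f i (Sum.inl j) = RCol.c j q := by
    intro j
    have hadjv : (redGraph H s).Adj (Sum.inl j) (Sum.inr (Sum.inr 1)) := by
      rw [redGraph, SimpleGraph.fromRel_adj]
      exact ⟨by simp, Or.inl rfl⟩
    have hnst : f i (Sum.inl j) ≠ RCol.star := by
      rw [← hstar]; exact hp.2 _ _ hadjv
    have hmem := hp.1 (Sum.inl j)
    simp only [redList, Set.mem_union, Set.mem_singleton_iff, Set.mem_setOf_eq] at hmem
    rcases hmem with h | h
    · exact absurd h hnst
    · exact h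
  choose p hpdef using hselc
  have gadget : ∀ (g : Gadget H s),
      f i (Sum.inr (Sum.inl g)) = RCol.c g.val.1.1 g.val.2.2 ∨
      f i (Sum.inr (Sum.inl g)) = RCol.c g.val.1.2 g.val.2.1 := by
    intro g
    have := hp.1 (Sum.inr (Sum.inl g))
    simpa [redList] using this
  have gadjA : ∀ (g : Gadget H s),
      (redGraph H s).Adj (Sum.inr (Sum.inl g)) (Sum.inl g.val.1.1) := by
    intro g
    rw [redGraph, SimpleGraph.fromRel_adj]
    exact ⟨by simp, Or.inl (Or.inl rfl)⟩
  have gadjB : ∀ (g : Gadget H s),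
      (redGraph H s).Adj (Sum.inr (Sum.inl g)) (Sum.inl g.val.1.2) := by
    intro g
    rw [redGraph, SimpleGraph.fromRel_adj]
    exact ⟨by simp, Or.inl (Or.inr rfl)⟩
  have hdist : ∀ a b : Fin s, a < b → p a ≠ p b := by
    intro a b hab heq
    set g : Gadget H s := ⟨((a, b), (p a, p a)), hab, Or.inl rfl⟩ with hgdef
    have hg := gadget g
    have nea : f i (Sum.inr (Sum.inl g)) ≠ RCol.c a (p a) := by
      have := hp.2 _ _ (gadjA g)
      rwa [hpdef] at this
    have neb : f i (Sum.inr (Sum.inl g)) ≠ RCol.c b (p a) := by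
      have := hp.2 _ _ (gadjB g)
      rw [hpdef] at this
      rwa [heq]
    rcases hg with h | h
    · exact nea h
    · exact neb h
  have hnadj : ∀ a b : Fin s, a < b → ¬ H.Adj (p a) (p b) := by
    intro a b hab hadjH
    set g : Gadget H s := ⟨((a, b), (p b, p a)), hab, Or.inr hadjH.symm⟩ with hgdef
    have hg := gadget g
    have nea : f i (Sum.inr (Sum.inl g)) ≠ RCol.c a (p a) := by
      have := hp.2 _ _ (gadjA g)
      rwa [hpdef] at this
    have neb : f i (Sum.inr (Sum.inl g)) ≠ RCol.c b (p b) := by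
      have := hp.2 _ _ (gadjB g)
      rwa [hpdef] at this
    rcases hg with h | h
    · exact nea h
    · exact neb h
  refine ⟨p, hpdef, ?_, ?_⟩
  · intro a b heq
    by_contra hne
    rcases lt_trichotomy a b with h | h | h
    · exact hdist a b h heq
    · exact hne h
    · exact hdist b a h heq.symm
  · intro a b hne hadjH
    rcases lt_trichotomy a b with h | h | h
    · exact hnadj a b h hadjH
    · exact hne h
    · exact hnadj b a h hadjH.symm
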